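/- Monotonic policy improvement of the regularized surrogate: fix a policy π and define, for every policy π', F(π') = L_π(π') − ε(π')·D_TV(d^{π'}_ρ ‖ d^π_ρ), where ε(π') = max_{s∈S} |∑_{a∈A} π'(a|s) A^π(s,a)|. If π⁺ is a policy satisfying F(π⁺) ≥ F(π'') for every policy π'', then J(π⁺) ≥ J(π). -/
import Mathlib

open Finset

noncomputable section

variable {S A : Type*} [Fintype S] [Fintype A]

/-- The t-step state distribution of policy `π` started from `ρ`. -/
def stateDist (P : S → A → S → ℝ) (π : S → A → ℝ) (ρ : S → ℝ) : ℕ → S → ℝ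
  | 0 => ρ
  | t + 1 => fun s' => ∑ s, ∑ a, stateDist P π ρ t s * π s a * P s a s'

/-- The discounted state visitation distribution `d^π_ρ`. -/
def dvisit (P : S → A → S → ℝ) (π : S → A → ℝ) (ρ : S → ℝ) (γ : ℝ) (s : S) : ℝ :=
  (1 - γ) * ∑' t : ℕ, γ ^ t * stateDist P π ρ t s

/-- Total variation distance between real-valued functions on a finite set. -/
def dTV {X : Type*} [Fintype X] (p q : X → ℝ) : ℝ := ∑ x, |p x - q x|

lemma stateDist_nonneg (P : S → A → S → ℝ) (π : S → A → ℝ) (ρ : S → ℝ)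
    (hP0 : ∀ s a s', 0 ≤ P s a s') (hπ0 : ∀ s a, 0 ≤ π s a)
    (hρ0 : ∀ s, 0 ≤ ρ s) : ∀ t s, 0 ≤ stateDist P π ρ t s := by
  intro t
  induction t with
  | zero => exact hρ0
  | succ t ih =>
    intro s'
    exact Finset.sum_nonneg fun s _ => Finset.sum_nonneg fun a _ =>
      mul_nonneg (mul_nonneg (ih s) (hπ0 s a)) (hP0 s a s')

lemma stateDist_sum_one (P : S → A → S → ℝ) (π : S → A → ℝ) (ρ : S → ℝ)
    (hP1 : ∀ s a, ∑ s', P s a s' = 1) (hπ1 : ∀ s, ∑ a, π s a = 1)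
    (hρ1 : ∑ s, ρ s = 1) : ∀ t, ∑ s, stateDist P π ρ t s = 1 := by
  intro t
  induction t with
  | zero => exact hρ1
  | succ t ih =>
    show ∑ s', ∑ s, ∑ a, stateDist P π ρ t s * π s a * P s a s' = 1
    rw [Finset.sum_comm]
    calc ∑ s, ∑ s', ∑ a, stateDist P π ρ t s * π s a * P s a s'
        = ∑ s, ∑ a, ∑ s', stateDist P π ρ t s * π s a * P s a s' := by
          exact Finset.sum_congr rfl fun s _ => Finset.sum_comm
      _ = ∑ s, ∑ a, stateDist P π ρ t s * π s a := by
          refine Finset.sum_congr rfl fun s _ => Finset.sum_congr rfl fun a _ => ?_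
          rw [← Finset.mul_sum, hP1 s a, mul_one]
      _ = 1 := by
          rw [← ih]
          exact Finset.sum_congr rfl fun s _ => by rw [← Finset.mul_sum, hπ1 s, mul_one]

lemma summable_geom_bdd (γ : ℝ) (hγ0 : 0 ≤ γ) (hγ1 : γ < 1) (x : ℕ → ℝ) (C : ℝ)
    (hx : ∀ t, |x t| ≤ C) : Summable (fun t => γ ^ t * x t) := by
  apply Summable.of_norm
  refine Summable.of_nonneg_of_le (fun t => norm_nonneg _) (fun t => ?_)
    ((summable_geometric_of_lt_one hγ0 hγ1).mul_right C)
  have : ‖γ ^ t * x t‖ = γ ^ t * |x t| := by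
    rw [norm_mul, Real.norm_eq_abs, Real.norm_eq_abs, abs_pow, abs_of_nonneg hγ0]
  rw [this]
  exact mul_le_mul_of_nonneg_left (hx t) (pow_nonneg hγ0 t)

lemma telescope_geom (γ : ℝ) (hγ0 : 0 ≤ γ) (hγ1 : γ < 1) (x : ℕ → ℝ) (C : ℝ)
    (hx : ∀ t, |x t| ≤ C) :
    ∑' t : ℕ, γ ^ t * (x t - γ * x (t + 1)) = x 0 := by
  have h1 : Summable (fun t => γ ^ t * x t) := summable_geom_bdd γ hγ0 hγ1 x C hx
  have h2 : Summable (fun t : ℕ => γ ^ (t + 1) * x (t + 1)) :=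
    h1.comp_injective Nat.succ_injective
  have hsub : (fun t : ℕ => γ ^ t * (x t - γ * x (t + 1)))
      = fun t => γ ^ t * x t - γ ^ (t + 1) * x (t + 1) := by
    funext t; ring
  rw [hsub, Summable.tsum_sub h1 h2]
  have := Summable.tsum_eq_zero_add h1
  rw [this]
  simp

/-- Performance difference lemma. -/
lemma pdl (P : S → A → S → ℝ) (r : S → A → ℝ) (γ : ℝ) (ρ : S → ℝ)
    (hγ0 : 0 ≤ γ) (hγ1 : γ < 1)
    (hP0 : ∀ s a s', 0 ≤ P s a s') (hP1 : ∀ s a, ∑ s', P s a s' = 1)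
    (hρ0 : ∀ s, 0 ≤ ρ s) (hρ1 : ∑ s, ρ s = 1)
    (πp : S → A → ℝ) (hπp0 : ∀ s a, 0 ≤ πp s a) (hπp1 : ∀ s, ∑ a, πp s a = 1)
    (V Vp : S → ℝ)
    (hVp : ∀ s, Vp s = ∑ a, πp s a * (r s a + γ * ∑ s', P s a s' * Vp s')) :
    ∑ s, dvisit P πp ρ γ s * (∑ a, πp s a * ((r s a + γ * ∑ s', P s a s' * V s') - V s))
      = (1 - γ) * ∑ s, ρ s * Vp s - (1 - γ) * ∑ s, ρ s * V s := by
  set W : S → ℝ := fun s => Vp s - V s with hWdef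
  set Adv : S → ℝ :=
    fun s => ∑ a, πp s a * ((r s a + γ * ∑ s', P s a s' * V s') - V s) with hAdvdef
  show ∑ s, dvisit P πp ρ γ s * Adv s = _
  -- step 1: pointwise identity for Adv
  have hA : ∀ s, Adv s = W s - γ * ∑ s', (∑ a, πp s a * P s a s') * W s' := by
    intro s
    have c1 : ∀ (U : S → ℝ), ∑ a, πp s a * (r s a + γ * ∑ s', P s a s' * U s')
        = (∑ a, πp s a * r s a) + γ * ∑ a, ∑ s', πp s a * (P s a s' * U s') := by
      intro U
      calc ∑ a, πp s a * (r s a + γ * ∑ s', P s a s' * U s')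
          = ∑ a, (πp s a * r s a + γ * ∑ s', πp s a * (P s a s' * U s')) := by
            refine Finset.sum_congr rfl fun a _ => ?_
            rw [mul_add, mul_left_comm, Finset.mul_sum]
        _ = _ := by rw [Finset.sum_add_distrib, ← Finset.mul_sum]
    have c2 : ∑ s', (∑ a, πp s a * P s a s') * W s'
        = ∑ a, ∑ s', πp s a * (P s a s' * W s') := by
      calc ∑ s', (∑ a, πp s a * P s a s') * W s'
          = ∑ s', ∑ a, πp s a * (P s a s' * W s') := by
            refine Finset.sum_congr rfl fun s' _ => ?_
            rw [Finset.sum_mul]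
            exact Finset.sum_congr rfl fun a _ => by ring
        _ = _ := Finset.sum_comm
    have c3 : ∑ a, ∑ s', πp s a * (P s a s' * W s')
        = (∑ a, ∑ s', πp s a * (P s a s' * Vp s'))
          - ∑ a, ∑ s', πp s a * (P s a s' * V s') := by
      rw [← Finset.sum_sub_distrib]
      refine Finset.sum_congr rfl fun a _ => ?_
      rw [← Finset.sum_sub_distrib]
      refine Finset.sum_congr rfl fun s' _ => ?_
      simp only [hWdef]; ring
    have e1 : Adv s
        = (∑ a, πp s a * (r s a + γ * ∑ s', P s a s' * V s')) - V s := by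
      simp only [hAdvdef]
      calc ∑ a, πp s a * ((r s a + γ * ∑ s', P s a s' * V s') - V s)
          = ∑ a, (πp s a * (r s a + γ * ∑ s', P s a s' * V s') - πp s a * V s) := by
            exact Finset.sum_congr rfl fun a _ => by ring
        _ = (∑ a, πp s a * (r s a + γ * ∑ s', P s a s' * V s')) - (∑ a, πp s a) * V s := by
            rw [Finset.sum_sub_distrib, ← Finset.sum_mul]
        _ = _ := by rw [hπp1 s, one_mul]
    have hVps : Vp s = (∑ a, πp s a * r s a)
        + γ * ∑ a, ∑ s', πp s a * (P s a s' * Vp s') := by rw [hVp s, c1 Vp]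
    rw [e1, c1 V, c2, c3]
    have hWs : W s = Vp s - V s := rfl
    rw [hWs, hVps]
    ring
  -- basic facts about stateDist for πp
  have hdt0 := stateDist_nonneg P πp ρ hP0 hπp0 hρ0
  have hdt1 := stateDist_sum_one P πp ρ hP1 hπp1 hρ1
  have hdtle : ∀ t s, stateDist P πp ρ t s ≤ 1 := by
    intro t s
    calc stateDist P πp ρ t s
        ≤ ∑ s, stateDist P πp ρ t s :=
          Finset.single_le_sum (fun s _ => hdt0 t s) (Finset.mem_univ s)
      _ = 1 := hdt1 t
  -- the sequence x t = ∑ s, d_t s * W s and its bound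
  set x : ℕ → ℝ := fun t => ∑ s, stateDist P πp ρ t s * W s with hxdef
  set C : ℝ := ∑ s, |W s| with hCdef
  have hxbd : ∀ t, |x t| ≤ C := by
    intro t
    calc |∑ s, stateDist P πp ρ t s * W s|
        ≤ ∑ s, |stateDist P πp ρ t s * W s| := Finset.abs_sum_le_sum_abs _ _
      _ ≤ ∑ s, |W s| := by
          refine Finset.sum_le_sum fun s _ => ?_
          rw [abs_mul, abs_of_nonneg (hdt0 t s)]
          exact mul_le_of_le_one_left (abs_nonneg _) (hdtle t s)
  -- one-step identity
  have hstep : ∀ t, ∑ s, stateDist P πp ρ t s * Adv s = x t - γ * x (t + 1) := by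
    intro t
    have lhs_eq : ∑ s, stateDist P πp ρ t s * ∑ s', (∑ a, πp s a * P s a s') * W s'
        = ∑ s, ∑ s', ∑ a, stateDist P πp ρ t s * πp s a * P s a s' * W s' := by
      refine Finset.sum_congr rfl fun s _ => ?_
      rw [Finset.mul_sum]
      refine Finset.sum_congr rfl fun s' _ => ?_
      rw [Finset.sum_mul, Finset.mul_sum]
      exact Finset.sum_congr rfl fun a _ => by ring
    have rhs_eq : x (t + 1)
        = ∑ s', ∑ s, ∑ a, stateDist P πp ρ t s * πp s a * P s a s' * W s' := by
      show ∑ s', stateDist P πp ρ (t + 1) s' * W s' = _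
      refine Finset.sum_congr rfl fun s' _ => ?_
      show (∑ s, ∑ a, stateDist P πp ρ t s * πp s a * P s a s') * W s' = _
      rw [Finset.sum_mul]
      exact Finset.sum_congr rfl fun s _ => by rw [Finset.sum_mul]
    calc ∑ s, stateDist P πp ρ t s * Adv s
        = ∑ s, (stateDist P πp ρ t s * W s
            - γ * (stateDist P πp ρ t s * ∑ s', (∑ a, πp s a * P s a s') * W s')) := by
          refine Finset.sum_congr rfl fun s _ => ?_
          rw [hA s]; ring
      _ = x t - γ * ∑ s, stateDist P πp ρ t s * ∑ s', (∑ a, πp s a * P s a s') * W s' := by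
          rw [Finset.sum_sub_distrib, ← Finset.mul_sum]
      _ = x t - γ * x (t + 1) := by
          rw [lhs_eq, rhs_eq, Finset.sum_comm]
  -- summability
  have hsum_s : ∀ s, Summable (fun t => γ ^ t * stateDist P πp ρ t s) := by
    intro s
    refine summable_geom_bdd γ hγ0 hγ1 _ 1 fun t => ?_
    rw [abs_of_nonneg (hdt0 t s)]
    exact hdtle t s
  -- swap sums
  have e0 : ∑ s, dvisit P πp ρ γ s * Adv s
      = (1 - γ) * ∑' t : ℕ, γ ^ t * ∑ s, stateDist P πp ρ t s * Adv s := by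
    have step1 : ∀ s, dvisit P πp ρ γ s * Adv s
        = (1 - γ) * ∑' t : ℕ, γ ^ t * stateDist P πp ρ t s * Adv s := by
      intro s
      show (1 - γ) * (∑' t : ℕ, γ ^ t * stateDist P πp ρ t s) * Adv s = _
      rw [mul_assoc, ← tsum_mul_right]
    calc ∑ s, dvisit P πp ρ γ s * Adv s
        = ∑ s, (1 - γ) * ∑' t : ℕ, γ ^ t * stateDist P πp ρ t s * Adv s := by
          exact Finset.sum_congr rfl fun s _ => step1 s
      _ = (1 - γ) * ∑ s, ∑' t : ℕ, γ ^ t * stateDist P πp ρ t s * Adv s := by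
          rw [Finset.mul_sum]
      _ = (1 - γ) * ∑' t : ℕ, ∑ s, γ ^ t * stateDist P πp ρ t s * Adv s := by
          rw [← Summable.tsum_finsetSum fun s _ => (hsum_s s).mul_right (Adv s)]
      _ = (1 - γ) * ∑' t : ℕ, γ ^ t * ∑ s, stateDist P πp ρ t s * Adv s := by
          congr 1
          refine tsum_congr fun t => ?_
          rw [Finset.mul_sum]
          exact Finset.sum_congr rfl fun s _ => by ring
  rw [e0]
  have e1 : ∑' t : ℕ, γ ^ t * ∑ s, stateDist P πp ρ t s * Adv s
      = ∑' t : ℕ, γ ^ t * (x t - γ * x (t + 1)) := tsum_congr fun t => by rw [hstep t]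
  rw [e1, telescope_geom γ hγ0 hγ1 x C hxbd]
  have hx0 : x 0 = ∑ s, ρ s * W s := rfl
  rw [hx0]
  simp only [hWdef]
  rw [Finset.mul_sum, Finset.mul_sum, Finset.mul_sum, ← Finset.sum_sub_distrib]
  exact Finset.sum_congr rfl fun s _ => by ring

/-- Combination step. -/
lemma final_combine {S : Type*} [Fintype S] (J Jp ε : ℝ) (E d dp : S → ℝ)
    (hPDL : ∑ s, dp s * E s = Jp - J)
    (hmax : (J + ∑ s, d s * E s) - ε * dTV dp d ≥ J)
    (hε : ∀ s, |E s| ≤ ε) :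
    Jp ≥ J := by
  have h2 : -(ε * dTV dp d) ≤ ∑ s, (dp s - d s) * E s := by
    have pt : ∀ s, -(|dp s - d s| * ε) ≤ (dp s - d s) * E s := by
      intro s
      have h3 : |(dp s - d s) * E s| ≤ |dp s - d s| * ε := by
        rw [abs_mul]
        exact mul_le_mul_of_nonneg_left (hε s) (abs_nonneg _)
      have h4 : -|(dp s - d s) * E s| ≤ (dp s - d s) * E s := neg_abs_le _
      linarith
    calc -(ε * dTV dp d) = ∑ s, -(|dp s - d s| * ε) := by
          rw [dTV, Finset.mul_sum, ← Finset.sum_neg_distrib]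
          exact Finset.sum_congr rfl fun s _ => by ring
      _ ≤ ∑ s, (dp s - d s) * E s := Finset.sum_le_sum fun s _ => pt s
  have h5 : ∑ s, dp s * E s = ∑ s, d s * E s + ∑ s, (dp s - d s) * E s := by
    rw [← Finset.sum_add_distrib]
    exact Finset.sum_congr rfl fun s _ => by ring
  linarith

/-- Monotonic policy improvement: if `π⁺` maximizes
`F(π') = L_π(π') − ε(π')·D_TV(d^{π'}_ρ ‖ d^π_ρ)` over all policies, then `J(π⁺) ≥ J(π)`. -/
theorem regularized_surrogate_monotonic_improvement
    [Nonempty S] [Nonempty A]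
    (P : S → A → S → ℝ) (r : S → A → ℝ) (γ : ℝ) (ρ : S → ℝ)
    (hγ0 : 0 ≤ γ) (hγ1 : γ < 1)
    (hP0 : ∀ s a s', 0 ≤ P s a s') (hP1 : ∀ s a, ∑ s', P s a s' = 1)
    (hρ0 : ∀ s, 0 ≤ ρ s) (hρ1 : ∑ s, ρ s = 1)
    (π πp : S → A → ℝ)
    (hπ0 : ∀ s a, 0 ≤ π s a) (hπ1 : ∀ s, ∑ a, π s a = 1)
    (hπp0 : ∀ s a, 0 ≤ πp s a) (hπp1 : ∀ s, ∑ a, πp s a = 1)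
    (V Vp : S → ℝ)
    (hV : ∀ s, V s = ∑ a, π s a * (r s a + γ * ∑ s', P s a s' * V s'))
    (hVp : ∀ s, Vp s = ∑ a, πp s a * (r s a + γ * ∑ s', P s a s' * Vp s'))
    -- `F(π') = L_π(π') − ε(π')·D_TV(d^{π'}_ρ ‖ d^π_ρ)`
    (F : (S → A → ℝ) → ℝ)
    (hF : ∀ π' : S → A → ℝ, F π' =
      ((1 - γ) * ∑ s, ρ s * V s
        + ∑ s, dvisit P π ρ γ s *
            ∑ a, π' s a * ((r s a + γ * ∑ s', P s a s' * V s') - V s))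
      - (Finset.univ.sup' Finset.univ_nonempty
            (fun s => |∑ a, π' s a * ((r s a + γ * ∑ s', P s a s' * V s') - V s)|))
        * dTV (dvisit P π' ρ γ) (dvisit P π ρ γ))
    (hmax : ∀ π'' : S → A → ℝ, (∀ s a, 0 ≤ π'' s a) → (∀ s, ∑ a, π'' s a = 1) →
      F πp ≥ F π'') :
    (1 - γ) * ∑ s, ρ s * Vp s ≥ (1 - γ) * ∑ s, ρ s * V s := by
  -- the advantage of π against itself vanishes
  have hAdvπ : ∀ s, ∑ a, π s a * ((r s a + γ * ∑ s', P s a s' * V s') - V s) = 0 := by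
    intro s
    have h1 : ∑ a, π s a * ((r s a + γ * ∑ s', P s a s' * V s') - V s)
        = (∑ a, π s a * (r s a + γ * ∑ s', P s a s' * V s')) - (∑ a, π s a) * V s := by
      rw [Finset.sum_mul, ← Finset.sum_sub_distrib]
      exact Finset.sum_congr rfl fun a _ => by ring
    rw [h1, ← hV s, hπ1 s, one_mul, sub_self]
  -- F at π equals J(π)
  have hdTV0 : dTV (dvisit P π ρ γ) (dvisit P π ρ γ) = 0 := by simp [dTV]
  have hFπ : F π = (1 - γ) * ∑ s, ρ s * V s := by
    rw [hF π]
    simp [hAdvπ, hdTV0]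
  have hmaxπ : F πp ≥ (1 - γ) * ∑ s, ρ s * V s := by
    rw [← hFπ]; exact hmax π hπ0 hπ1
  rw [hF πp] at hmaxπ
  refine final_combine ((1 - γ) * ∑ s, ρ s * V s) ((1 - γ) * ∑ s, ρ s * Vp s)
    (Finset.univ.sup' Finset.univ_nonempty
      (fun s => |∑ a, πp s a * ((r s a + γ * ∑ s', P s a s' * V s') - V s)|))
    (fun s => ∑ a, πp s a * ((r s a + γ * ∑ s', P s a s' * V s') - V s))
    (dvisit P π ρ γ) (dvisit P πp ρ γ) ?_ ?_ ?_
  · have := pdl P r γ ρ hγ0 hγ1 hP0 hP1 hρ0 hρ1 πp hπp0 hπp1 V Vp hVp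
    linarith [this]
  · exact hmaxπ
  · intro s
    exact Finset.le_sup'
      (fun s => |∑ a, πp s a * ((r s a + γ * ∑ s', P s a s' * V s') - V s)|)
      (Finset.mem_univ s)
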